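/- For every nonnegative integer n, U(2n) = n² + U(n) and U(2n+1) = (n+1)² + U(n), with U(0) = 0. -/
import Mathlib

open Finset

/-- The largest odd divisor of `k`. -/
def oddPart (k : ℕ) : ℕ := ordCompl[2] k

/-- `V n = ∑_{k=1}^n α(k)/k` as a rational number. -/
def V (n : ℕ) : ℚ := ∑ k ∈ Finset.Icc 1 n, (oddPart k : ℚ) / k

/-- `v n = V n - 2n/3`. -/
def v (n : ℕ) : ℚ := V n - 2 * n / 3

/-- `U n = ∑_{k=1}^n α(k)`. -/
def U (n : ℕ) : ℕ := ∑ k ∈ Finset.Icc 1 n, oddPart k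

/-- `G n = ∑_{k=1}^n (n+1-k)·α(k)/k` as a rational number. -/
def G (n : ℕ) : ℚ := ∑ k ∈ Finset.Icc 1 n, ((n : ℚ) + 1 - k) * (oddPart k : ℚ) / k

/-- `g n = n(n+2)/3 - G n`. -/
def g (n : ℕ) : ℚ := n * (n + 2) / 3 - G n

lemma U_succ (n : ℕ) : U (n + 1) = U n + oddPart (n + 1) := by
  unfold U
  rw [Finset.sum_Icc_succ_top (by omega)]

lemma oddPart_two_mul (k : ℕ) : oddPart (2 * k) = oddPart k := by
  unfold oddPart
  rw [Nat.ordCompl_mul, Nat.Prime.factorization_self Nat.prime_two]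
  simp

lemma oddPart_odd (n : ℕ) : oddPart (2 * n + 1) = 2 * n + 1 := by
  unfold oddPart
  have : (2 * n + 1).factorization 2 = 0 := by
    rw [Nat.factorization_eq_zero_iff]
    right; left
    omega
  rw [this]; simp

theorem stmt9 (n : ℕ) :
    U (2 * n) = n ^ 2 + U n ∧ U (2 * n + 1) = (n + 1) ^ 2 + U n := by
  induction n with
  | zero => simp [U, oddPart]
  | succ n ih =>
    obtain ⟨h1, h2⟩ := ih
    have e1 : U (2 * (n + 1)) = (n + 1) ^ 2 + U (n + 1) := by
      have : 2 * (n + 1) = (2 * n + 1) + 1 := by ring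
      rw [this, U_succ, h2]
      have : 2 * n + 1 + 1 = 2 * (n + 1) := by ring
      rw [this, oddPart_two_mul, U_succ]
      ring
    refine ⟨e1, ?_⟩
    rw [U_succ, e1, oddPart_odd]
    ring
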